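/- Let x be a 3×3 real matrix with cofactors Δ_n^k (the cofactor of x_n^k), let Φ: ℝ⁹ → ℝ be C¹, and define F(x) = Φ(Δ). Let Φ_k^n = ∂Φ/∂Δ_n^k evaluated at Δ(x), and let y be the matrix y_k^n = ∂F/∂x_n^k. If the 3×3 matrix (Φ_k^n) has rank 1 (all its 2×2 minors vanish, i.e., Φ_k^n Φ_j^i = Φ_j^n Φ_k^i for all indices), then each cofactor D_k^n of y satisfies D_k^n = Φ_k^n · Σ_{i,j} Φ_j^i Δ_i^j. -/

import Mathlib

attribute [local instance] Matrix.normedAddCommGroup Matrix.normedSpace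

/-!
The cofactor map `z ↦ (adjugate z)ᵀ` of `3 × 3` matrices is quadratic; its derivative at `x` is
`H ↦ mixedCofactor x H`, the polarization of the cofactor map. By the chain rule and the symmetry
of the mixed determinant `trace (mixedCofactor A B * Cᵀ)` in `B` and `C`, the gradient `y` is
`(mixedCofactor x Gᵀ)ᵀ`. Vanishing `2 × 2` minors make `Gᵀ = u vᵀ`, and for such a rank-one
matrix the cofactor matrix of `mixedCofactor x (u vᵀ)` is `trace (adjugate x * u vᵀ) • u vᵀ`,
a polynomial identity.
-/

open Matrix

namespace Matrix

section CommRing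

variable {R : Type*} [CommRing R]

theorem adjugate_fin_three_apply (A : Matrix (Fin 3) (Fin 3) R) (i j : Fin 3) :
    A.adjugate j i =
      A (i + 1) (j + 1) * A (i + 2) (j + 2) - A (i + 1) (j + 2) * A (i + 2) (j + 1) := by
  rw [adjugate_fin_three]
  fin_cases i <;> fin_cases j <;> simp <;> ring

/-- `(adjugate (A + B))ᵀ = (adjugate A)ᵀ + mixedCofactor A B + (adjugate B)ᵀ`. -/
def mixedCofactor (A B : Matrix (Fin 3) (Fin 3) R) : Matrix (Fin 3) (Fin 3) R :=
  of fun i j => A (i + 1) (j + 1) * B (i + 2) (j + 2) + B (i + 1) (j + 1) * A (i + 2) (j + 2)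
    - A (i + 1) (j + 2) * B (i + 2) (j + 1) - B (i + 1) (j + 2) * A (i + 2) (j + 1)

def mixedCofactorLinearMap (A : Matrix (Fin 3) (Fin 3) R) :
    Matrix (Fin 3) (Fin 3) R →ₗ[R] Matrix (Fin 3) (Fin 3) R where
  toFun := mixedCofactor A
  map_add' B C := by
    ext i j
    simp only [mixedCofactor, of_apply, add_apply]
    ring
  map_smul' r B := by
    ext i j
    simp only [mixedCofactor, of_apply, smul_apply, smul_eq_mul, RingHom.id_apply]
    ring

theorem trace_mixedCofactor_mul (A B C : Matrix (Fin 3) (Fin 3) R) :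
    trace (mixedCofactor A B * C) = trace (mixedCofactor A Cᵀ * Bᵀ) := by
  simp only [trace, diag, mul_apply, transpose_apply, mixedCofactor, of_apply, Fin.sum_univ_three,
    Fin.reduceAdd, Fin.isValue]
  ring

theorem adjugate_mixedCofactor_vecMulVec (A : Matrix (Fin 3) (Fin 3) R) (u v : Fin 3 → R) :
    adjugate (mixedCofactor A (vecMulVec u v)) =
      trace (adjugate A * vecMulVec u v) • (vecMulVec u v)ᵀ := by
  ext i j
  rw [adjugate_fin_three_apply]
  simp only [trace, diag, mul_apply, adjugate_fin_three_apply, Fin.sum_univ_three, mixedCofactor,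
    vecMulVec, of_apply, smul_apply, transpose_apply, smul_eq_mul]
  fin_cases i <;> fin_cases j <;> simp <;> ring

end CommRing

theorem exists_eq_vecMulVec_of_mul_eq_mul {K m n : Type*} [Field K] (A : Matrix m n K)
    (hA : ∀ i j k l, A i k * A j l = A i l * A j k) : ∃ u v, A = vecMulVec u v := by
  by_cases h : A = 0
  · exact ⟨0, 0, by ext; simp [h, vecMulVec]⟩
  obtain ⟨i₀, k₀, h₀⟩ : ∃ i k, A i k ≠ 0 := by
    by_contra! h'
    exact h (ext h')
  refine ⟨fun i => A i k₀, fun k => A i₀ k / A i₀ k₀, ext fun i k => ?_⟩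
  rw [vecMulVec_apply, mul_div_assoc', eq_div_iff h₀, hA]

theorem linearMap_apply_eq_trace_mul {R m n : Type*} [CommSemiring R] [Fintype m] [Fintype n]
    [DecidableEq m] [DecidableEq n] (ℓ : Matrix m n R →ₗ[R] R) (G : Matrix n m R)
    (hG : ∀ j i, G j i = ℓ (single i j 1)) (M : Matrix m n R) : ℓ M = trace (M * G) := by
  have hsingle : ∀ i j, single i j (M i j) = M i j • single i j 1 := by simp [smul_single]
  conv_lhs => rw [matrix_eq_sum_single M]
  simp only [hsingle, map_sum, map_smul, trace, diag, mul_apply, hG, smul_eq_mul]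

section Calculus

variable {𝕜 : Type*} [NontriviallyNormedField 𝕜] [CompleteSpace 𝕜]

theorem hasFDerivAt_adjugate_transpose (x : Matrix (Fin 3) (Fin 3) 𝕜) :
    HasFDerivAt (fun z => z.adjugateᵀ) (mixedCofactorLinearMap x).toContinuousLinearMap x := by
  refine hasFDerivAt_pi'.2 fun i => hasFDerivAt_pi'.2 fun j => ?_
  have hentry : ∀ a b, HasFDerivAt (fun z : Matrix (Fin 3) (Fin 3) 𝕜 => z a b)
      (entryLinearMap 𝕜 𝕜 a b).toContinuousLinearMap x := fun a b =>
    (entryLinearMap 𝕜 𝕜 a b).toContinuousLinearMap.hasFDerivAt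
  simp only [transpose_apply, adjugate_fin_three_apply]
  refine (((hentry _ _).mul (hentry _ _)).sub ((hentry _ _).mul (hentry _ _))).congr_fderiv ?_
  refine ContinuousLinearMap.ext fun H => ?_
  change x (i + 1) (j + 1) * H (i + 2) (j + 2) + x (i + 2) (j + 2) * H (i + 1) (j + 1)
    - (x (i + 1) (j + 2) * H (i + 2) (j + 1) + x (i + 2) (j + 1) * H (i + 1) (j + 2))
    = mixedCofactor x H i j
  simp only [mixedCofactor, of_apply]
  ring

theorem fderiv_comp_adjugate_transpose_single {Φ : Matrix (Fin 3) (Fin 3) 𝕜 → 𝕜}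
    {x : Matrix (Fin 3) (Fin 3) 𝕜} (hΦ : DifferentiableAt 𝕜 Φ x.adjugateᵀ)
    {G : Matrix (Fin 3) (Fin 3) 𝕜} (hG : ∀ k n, G k n = fderiv 𝕜 Φ x.adjugateᵀ (single n k 1))
    (k n : Fin 3) :
    fderiv 𝕜 (fun z => Φ z.adjugateᵀ) x (single n k 1) = mixedCofactor x Gᵀ n k := by
  have hL : ∀ M, fderiv 𝕜 Φ x.adjugateᵀ M = trace (M * G) :=
    linearMap_apply_eq_trace_mul (fderiv 𝕜 Φ x.adjugateᵀ).toLinearMap G hG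
  have hF : HasFDerivAt (fun z => Φ z.adjugateᵀ)
      ((fderiv 𝕜 Φ x.adjugateᵀ).comp (mixedCofactorLinearMap x).toContinuousLinearMap) x :=
    hΦ.hasFDerivAt.comp x (hasFDerivAt_adjugate_transpose x)
  rw [hF.fderiv, ContinuousLinearMap.comp_apply, hL]
  change trace (mixedCofactor x (single n k 1) * G) = _
  rw [trace_mixedCofactor_mul, transpose_single, trace_mul_single]
  simp

end Calculus

end Matrix

theorem rank_one_cofactor_lemma
    (Φ : Matrix (Fin 3) (Fin 3) ℝ → ℝ) (hΦ : ContDiff ℝ 1 Φ)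
    (x Δ : Matrix (Fin 3) (Fin 3) ℝ) (hΔ : ∀ n k, Δ n k = x.adjugate k n)
    (G : Matrix (Fin 3) (Fin 3) ℝ)
    (hG : ∀ k n, G k n = fderiv ℝ Φ Δ (Matrix.single n k 1))
    (y : Matrix (Fin 3) (Fin 3) ℝ)
    (hy : ∀ k n, y k n =
      fderiv ℝ (fun z : Matrix (Fin 3) (Fin 3) ℝ => Φ (Matrix.of fun a b => z.adjugate b a))
        x (Matrix.single n k 1))
    (hrank : ∀ n k i j, G k n * G j i = G j n * G k i) :
    ∀ k n, y.adjugate n k = G k n * ∑ i, ∑ j, G j i * Δ i j := by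
  obtain rfl : Δ = x.adjugateᵀ := ext hΔ
  have hy' : y = (mixedCofactor x Gᵀ)ᵀ := ext fun k n =>
    (hy k n).trans (fderiv_comp_adjugate_transpose_single (hΦ.differentiable one_ne_zero _) hG k n)
  obtain ⟨u, v, huv⟩ := exists_eq_vecMulVec_of_mul_eq_mul Gᵀ fun i j k l => hrank i k j l
  intro k n
  rw [hy', ← adjugate_transpose, transpose_apply, huv, adjugate_mixedCofactor_vecMulVec, ← huv,
    transpose_transpose, Matrix.smul_apply, smul_eq_mul, mul_comm]
  congr 1
  simp only [trace, diag, mul_apply, transpose_apply]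
  rw [Finset.sum_comm]
  simp_rw [mul_comm]
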